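/- arXiv:1809.04362 — 4 statements merged into one kernel-verified Lean document; each statement's English description precedes it below -/
import Mathlib

section
/- Every interval catch digraph admits a kernel. -/
namespace LD

/-- `K` is a kernel of the digraph with vertex set `S` and arc relation `A`:
independent and absorbing. -/
def Kernel {V : Type*} (S : Set V) (A : V → V → Prop) (K : Set V) : Prop :=
  K ⊆ S ∧ (∀ i ∈ K, ∀ j ∈ K, ¬ A i j) ∧ ∀ u ∈ S, u ∉ K → ∃ k ∈ K, A u k

/-- A digraph on the linearly ordered vertex set `{1,…,n}` (here `Fin n`) is an
interval catch digraph: the out-neighborhood of each vertex `i` is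
`{l_i,…,r_i} \ {i}` for some `l_i ≤ i ≤ r_i`. -/
def IntervalCatchFull {n : ℕ} (A : Fin n → Fin n → Prop) : Prop :=
  ∀ i : Fin n, ∃ l r : Fin n, l ≤ i ∧ i ≤ r ∧
    ∀ j : Fin n, (A i j ↔ (l ≤ j ∧ j ≤ r ∧ j ≠ i))

end LD

/-- `q` is the top of a "good" partial kernel: a set `K` of vertices all `≤ q`,
independent, containing `q`, and absorbing every vertex `< q`. -/
def GoodTop {n : ℕ} (A : Fin n → Fin n → Prop) (q : Fin n) : Prop :=
  ∃ K : Set (Fin n), q ∈ K ∧ (∀ k ∈ K, (k : ℕ) ≤ (q : ℕ)) ∧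
    (∀ i ∈ K, ∀ j ∈ K, ¬ A i j) ∧
    ∀ u : Fin n, (u : ℕ) < (q : ℕ) → u ∈ K ∨ ∃ k ∈ K, A u k

/-- Main auxiliary lemma, proved by strong induction on the ceiling `c`.
`E` is the "excuse" threshold: a vertex `u < c` is *needy* if `r u < E`.
If there is a needy vertex, then there is a needy-dominant good top `q < c`. -/
theorem intervalCatch_aux {n : ℕ} (A : Fin n → Fin n → Prop) (l r : Fin n → Fin n)
    (hl : ∀ i : Fin n, (l i : ℕ) ≤ (i : ℕ)) (hr : ∀ i : Fin n, (i : ℕ) ≤ (r i : ℕ))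
    (hiff : ∀ i j, A i j ↔ ((l i : ℕ) ≤ (j : ℕ) ∧ (j : ℕ) ≤ (r i : ℕ) ∧ j ≠ i)) :
    ∀ c E : ℕ, (∃ u : Fin n, (u : ℕ) < c ∧ (r u : ℕ) < E) →
    ∃ q : Fin n, (q : ℕ) < c ∧ (r q : ℕ) < E ∧
      (∀ u : Fin n, (u : ℕ) < c → (r u : ℕ) < E → (l u : ℕ) ≤ (q : ℕ)) ∧ GoodTop A q := by
  intro c
  induction c using Nat.strong_induction_on with
  | _ c IH =>
  intro E hne
  classical
  set N : Finset (Fin n) := Finset.univ.filter (fun u => (u : ℕ) < c ∧ (r u : ℕ) < E) with hN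
  have hNne : N.Nonempty := by
    obtain ⟨u, hu1, hu2⟩ := hne
    exact ⟨u, by simp [hN, hu1, hu2]⟩
  set w := N.max' hNne with hw
  have hwmem := Finset.mem_filter.1 (N.max'_mem hNne)
  obtain ⟨-, hwc, hwE⟩ := hwmem
  have hwmax : ∀ u : Fin n, (u : ℕ) < c → (r u : ℕ) < E → (u : ℕ) ≤ (w : ℕ) := by
    intro u h1 h2
    exact Fin.le_def.mp (N.le_max' u (by simp [hN, h1, h2]))
  have hwltE : (w : ℕ) < E := lt_of_le_of_lt (hr w) hwE
  by_cases h1 : ∃ u : Fin n, (u : ℕ) < (w : ℕ) ∧ (r u : ℕ) < (w : ℕ)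
  · obtain ⟨qA, hqAw, hrAw, hdomA, hGA⟩ := IH (w : ℕ) hwc (w : ℕ) h1
    by_cases h2 : (qA : ℕ) < (l w : ℕ)
    · -- use `w` as top, inserting it above the good set of `qA`
      obtain ⟨KA, hqAK, hKle, hKind, hKcov⟩ := hGA
      refine ⟨w, hwc, hwE, fun u a b => le_trans (hl u) (hwmax u a b),
        insert w KA, Set.mem_insert _ _, ?_, ?_, ?_⟩
      · rintro k (rfl | hk)
        · exact le_refl _
        · exact le_trans (hKle k hk) (le_of_lt hqAw)
      · rintro i (rfl | hi) j (rfl | hj)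
        · intro hA'; exact ((hiff _ _).1 hA').2.2 rfl
        · intro hA'
          have h3 := ((hiff _ _).1 hA').1
          have h4 := hKle j hj
          omega
        · intro hA'
          have hwri := ((hiff _ _).1 hA').2.1
          by_cases hiq : i = qA
          · subst hiq; omega
          · have hnA : ¬ A i qA := hKind i hi qA hqAK
            have hri : (r i : ℕ) < (qA : ℕ) := by
              by_contra hcon
              push_neg at hcon
              exact hnA ((hiff _ _).2 ⟨le_trans (hl i) (hKle i hi), hcon, Ne.symm hiq⟩)
            omega
        · exact hKind i hi j hj
      · intro u hu
        rcases lt_trichotomy (u : ℕ) (qA : ℕ) with h | h | h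
        · rcases hKcov u h with h' | ⟨k, hk, hak⟩
          · exact Or.inl (Set.mem_insert_of_mem _ h')
          · exact Or.inr ⟨k, Set.mem_insert_of_mem _ hk, hak⟩
        · exact Or.inl (Set.mem_insert_of_mem _
            (by rwa [show u = qA from Fin.val_injective h]))
        · by_cases hru : (r u : ℕ) < (w : ℕ)
          · refine Or.inr ⟨qA, Set.mem_insert_of_mem _ hqAK, (hiff _ _).2
              ⟨hdomA u hu hru, ?_, ?_⟩⟩
            · have := hr u; omega
            · exact Fin.ne_of_val_ne (by omega)
          · refine Or.inr ⟨w, Set.mem_insert _ _, (hiff _ _).2 ⟨?_, ?_, ?_⟩⟩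
            · have := hl u; omega
            · omega
            · exact Fin.ne_of_val_ne (by omega)
    · push_neg at h2
      have h1E : ∃ u : Fin n, (u : ℕ) < (w : ℕ) ∧ (r u : ℕ) < E := by
        obtain ⟨u, a, b⟩ := h1; exact ⟨u, a, by omega⟩
      obtain ⟨qB, hqBw, hrBE, hdomB, hGB⟩ := IH (w : ℕ) hwc E h1E
      by_cases h3 : (l w : ℕ) ≤ (qB : ℕ)
      · refine ⟨qB, by omega, hrBE, ?_, hGB⟩
        intro u a b
        have hum := hwmax u a b
        rcases eq_or_lt_of_le hum with he | hlt
        · rw [show u = w from Fin.val_injective he]; exact h3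
        · exact hdomB u hlt b
      · push_neg at h3
        refine ⟨qA, by omega, by omega, ?_, hGA⟩
        intro u a b
        have hum := hwmax u a b
        rcases eq_or_lt_of_le hum with he | hlt
        · rw [show u = w from Fin.val_injective he]; exact h2
        · have := hdomB u hlt b; omega
  · push_neg at h1
    refine ⟨w, hwc, hwE, fun u a b => le_trans (hl u) (hwmax u a b),
      {w}, Set.mem_singleton _, ?_, ?_, ?_⟩
    · intro k hk
      rw [Set.mem_singleton_iff] at hk
      subst hk; exact le_refl _
    · intro i hi j hj
      rw [Set.mem_singleton_iff] at hi hj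
      subst hi; subst hj
      intro hA'
      exact ((hiff _ _).1 hA').2.2 rfl
    · intro u hu
      have hwr := h1 u hu
      refine Or.inr ⟨w, Set.mem_singleton _, (hiff _ _).2 ⟨?_, ?_, ?_⟩⟩
      · have := hl u; omega
      · omega
      · exact Fin.ne_of_val_ne (by omega)

open LD in
/-- every interval catch digraph admits a kernel. -/
theorem intervalCatch_has_kernel {n : ℕ} (A : Fin n → Fin n → Prop)
    (hA : IntervalCatchFull A) :
    ∃ K : Set (Fin n), Kernel Set.univ A K := by
  classical
  rcases Nat.eq_zero_or_pos n with h0 | hpos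
  · refine ⟨∅, Set.empty_subset _, fun i hi => absurd hi (Set.notMem_empty i),
      fun u _ _ => absurd u.pos (by omega)⟩
  · choose l r hl hr hiff using hA
    have hl' : ∀ i : Fin n, (l i : ℕ) ≤ (i : ℕ) := fun i => Fin.le_def.mp (hl i)
    have hr' : ∀ i : Fin n, (i : ℕ) ≤ (r i : ℕ) := fun i => Fin.le_def.mp (hr i)
    have hiff' : ∀ i j, A i j ↔ ((l i : ℕ) ≤ (j : ℕ) ∧ (j : ℕ) ≤ (r i : ℕ) ∧ j ≠ i) := by
      intro i j
      rw [hiff i j, Fin.le_def, Fin.le_def]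
    obtain ⟨q, hqn, hrq, hdom, K, hqK, hKle, hKind, hKcov⟩ :=
      intervalCatch_aux A l r hl' hr' hiff' n n ⟨⟨0, hpos⟩, hpos, (r ⟨0, hpos⟩).isLt⟩
    refine ⟨K, Set.subset_univ _, hKind, fun u _ huK => ?_⟩
    rcases lt_trichotomy (u : ℕ) (q : ℕ) with h | h | h
    · rcases hKcov u h with h' | h'
      · exact absurd h' huK
      · exact h'
    · exact absurd (by rw [show u = q from Fin.val_injective h]; exact hqK) huK
    · refine ⟨q, hqK, (hiff' u q).2 ⟨hdom u u.isLt (r u).isLt, ?_, ?_⟩⟩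
      · have := hr' u; omega
      · exact Fin.ne_of_val_ne (by omega)
end

section
/- Let G be an interval catch digraph on vertex set V = {1,…,n}, let K ⊆ V, and let k^1 < k^2 < ⋯ < k^p be the elements of K. Define the intervals I_0 = {1,…,k^1}, I_t = {k^t,…,k^{t+1}} for t ∈ {1,…,p−1}, and I_p = {k^p,…,n}. Then K is a kernelokernel of G if and only if, for every t ∈ {0,…,p}, the set K ∩ I_t is a kernel of the subgraph of G induced by I_t. -/
namespace LD

/-- Given the increasing enumeration `k : Fin p → Fin n` of a set `K`, the
interval `I_t` for `t ∈ {0,…,p}`: `I_0 = {1,…,k^1}`, `I_t = {k^t,…,k^{t+1}}`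
for `0 < t < p`, and `I_p = {k^p,…,n}`. -/
def Iv {n p : ℕ} (k : Fin p → Fin n) (t : Fin (p + 1)) : Set (Fin n) :=
  {x | (∀ _ : 0 < (t : ℕ), k ⟨(t : ℕ) - 1, by have := t.isLt; omega⟩ ≤ x) ∧
       (∀ ht : (t : ℕ) < p, x ≤ k ⟨(t : ℕ), ht⟩)}

end LD

/-!
Out-neighbourhoods of an interval catch digraph are intervals, so if a vertex `u` has an arc to
some `k^s ∈ K`, it also has an arc to every vertex strictly between `u` and `k^s`, in particular to
the element of `K` nearest to `u` on that side; that element is an endpoint of the interval `I_t`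
containing `u`. Hence absorption by `K` localises to the `I_t`. Conversely, an arc between two
elements of `K` yields, by the same convexity, an arc between two consecutive ones `k^s, k^{s+1}`,
which both lie in `I_{s+1}`; and the `I_t` cover `V`.
-/

namespace LD

variable {n p : ℕ} {A : Fin n → Fin n → Prop} {k : Fin p → Fin n}

theorem IntervalCatchFull.adj_of_mem_uIcc (hA : IntervalCatchFull A) {u m x : Fin n}
    (hum : A u m) (hx : x ∈ Set.uIcc u m) (hxu : x ≠ u) : A u x := by
  obtain ⟨l, r, hlu, hur, hspec⟩ := hA u
  obtain ⟨hlm, hmr, -⟩ := (hspec m).1 hum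
  obtain ⟨hlx, hxr⟩ := Set.uIcc_subset_Icc ⟨hlu, hur⟩ ⟨hlm, hmr⟩ hx
  exact (hspec x).2 ⟨hlx, hxr, hxu⟩

theorem IntervalCatchFull.ne_of_adj (hA : IntervalCatchFull A) {u v : Fin n} (h : A u v) :
    u ≠ v := by
  obtain ⟨_, _, -, -, hspec⟩ := hA u
  exact ((hspec v).1 h).2.2.symm

theorem mem_Iv_iff (hk : Monotone k) {t : Fin (p + 1)} {x : Fin n} :
    x ∈ Iv k t ↔ (∀ s : Fin p, (s : ℕ) < t → k s ≤ x) ∧ (∀ s : Fin p, (t : ℕ) ≤ s → x ≤ k s) := by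
  constructor
  · rintro ⟨hlo, hhi⟩
    exact ⟨fun s hs => (hk (Fin.le_def.2 (by simp only; omega))).trans (hlo (by omega)),
      fun s hs => (hhi (by omega)).trans (hk (Fin.le_def.2 hs))⟩
  · rintro ⟨hlo, hhi⟩
    exact ⟨fun _ => hlo _ (by simp only; omega), fun _ => hhi _ le_rfl⟩

/-- In the paper's 1-based indexing: `K ∩ I_t = {k^t, k^{t+1}}`. -/
theorem apply_mem_Iv_iff (hk : StrictMono k) {t : Fin (p + 1)} {s : Fin p} :
    k s ∈ Iv k t ↔ (s : ℕ) ≤ t ∧ (t : ℕ) ≤ s + 1 := by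
  simp only [mem_Iv_iff hk.monotone, hk.le_iff_le, Fin.le_def]
  constructor
  · rintro ⟨hlo, hhi⟩
    refine ⟨?_, ?_⟩
    · by_contra! h
      exact absurd (hhi ⟨t, by omega⟩ le_rfl) (by simp only; omega)
    · by_contra! h
      exact absurd (hlo ⟨s + 1, by omega⟩ h) (by simp only; omega)
  · rintro ⟨hst, hts⟩
    exact ⟨fun j hj => by omega, fun j hj => by omega⟩

theorem exists_mem_Iv (k : Fin p → Fin n) (x : Fin n) : ∃ t : Fin (p + 1), x ∈ Iv k t := by
  classical
  have hex : ∃ t : ℕ, ∀ h : t < p, x ≤ k ⟨t, h⟩ := ⟨p, fun h => absurd h (lt_irrefl p)⟩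
  have htp : Nat.find hex ≤ p := Nat.find_min' hex fun h => absurd h (lt_irrefl p)
  refine ⟨⟨Nat.find hex, by omega⟩, fun hpos => ?_, Nat.find_spec hex⟩
  have hprev := Nat.find_min hex (m := Nat.find hex - 1) (by simp only at hpos; omega)
  push Not at hprev
  obtain ⟨_, hlt⟩ := hprev
  exact hlt.le

theorem kernel_inter_Iv_of_kernel (hA : IntervalCatchFull A) (hk : StrictMono k)
    (hK : Kernel Set.univ A (Set.range k)) (t : Fin (p + 1)) :
    Kernel (Iv k t) A (Set.range k ∩ Iv k t) := by
  obtain ⟨-, hind, habs⟩ := hK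
  refine ⟨Set.inter_subset_right, fun i hi j hj => hind i hi.1 j hj.1, fun u hu huK => ?_⟩
  have hune : ∀ s, k s ≠ u := fun s h => huK ⟨⟨s, h⟩, hu⟩
  obtain ⟨-, ⟨s, rfl⟩, hus⟩ := habs u trivial fun h => huK ⟨h, hu⟩
  obtain ⟨hlo, hhi⟩ := (mem_Iv_iff hk.monotone).1 hu
  have hs := s.isLt
  rcases lt_or_gt_of_ne (hune s).symm with hlt | hgt
  · have hts : (t : ℕ) ≤ s := by
      by_contra! h
      exact absurd (hlo s h) (not_le.2 hlt)
    obtain ⟨s', hs'⟩ : ∃ s' : Fin p, (s' : ℕ) = t := ⟨⟨t, by omega⟩, rfl⟩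
    have hus' : u < k s' := lt_of_le_of_ne (hhi s' hs'.ge) (hune s').symm
    have hs's : k s' ≤ k s := hk.monotone (by rw [Fin.le_def]; omega)
    exact ⟨k s', ⟨⟨s', rfl⟩, (apply_mem_Iv_iff hk).2 (by omega)⟩,
      hA.adj_of_mem_uIcc hus (Set.mem_uIcc_of_le hus'.le hs's) (hune s')⟩
  · have hst : (s : ℕ) < t := by
      by_contra! h
      exact absurd (hhi s h) (not_le.2 hgt)
    obtain ⟨s', hs'⟩ : ∃ s' : Fin p, (s' : ℕ) = t - 1 := ⟨⟨t - 1, by omega⟩, rfl⟩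
    have hs'u : k s' < u := lt_of_le_of_ne (hlo s' (by omega)) (hune s')
    have hss' : k s ≤ k s' := hk.monotone (by rw [Fin.le_def]; omega)
    exact ⟨k s', ⟨⟨s', rfl⟩, (apply_mem_Iv_iff hk).2 (by omega)⟩,
      hA.adj_of_mem_uIcc hus (Set.mem_uIcc_of_ge hss' hs'u.le) (hune s')⟩

theorem kernel_of_forall_kernel_inter_Iv (hA : IntervalCatchFull A) (hk : StrictMono k)
    (hK : ∀ t : Fin (p + 1), Kernel (Iv k t) A (Set.range k ∩ Iv k t)) :
    Kernel Set.univ A (Set.range k) := by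
  refine ⟨Set.subset_univ _, ?_, fun u _ huK => ?_⟩
  · rintro _ ⟨i, rfl⟩ _ ⟨j, rfl⟩ hij
    have hind : ∀ (s s' : Fin p) (t : Fin (p + 1)), k s ∈ Iv k t → k s' ∈ Iv k t →
        ¬ A (k s) (k s') := fun s s' t hs hs' => (hK t).2.1 _ ⟨⟨s, rfl⟩, hs⟩ _ ⟨⟨s', rfl⟩, hs'⟩
    have hj := j.isLt
    rcases lt_or_gt_of_ne (ne_of_apply_ne k (hA.ne_of_adj hij).symm) with hji | hij'
    · rw [Fin.lt_def] at hji
      obtain ⟨s', hs'⟩ : ∃ s' : Fin p, (s' : ℕ) = i - 1 := ⟨⟨i - 1, by omega⟩, rfl⟩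
      have hs'i : k s' < k i := hk (by rw [Fin.lt_def]; omega)
      have hjs' : k j ≤ k s' := hk.monotone (by rw [Fin.le_def]; omega)
      exact hind i s' ⟨i, by omega⟩ ((apply_mem_Iv_iff hk).2 (by simp only; omega))
        ((apply_mem_Iv_iff hk).2 (by simp only; omega))
        (hA.adj_of_mem_uIcc hij (Set.mem_uIcc_of_ge hjs' hs'i.le) hs'i.ne)
    · rw [Fin.lt_def] at hij'
      obtain ⟨s', hs'⟩ : ∃ s' : Fin p, (s' : ℕ) = i + 1 := ⟨⟨i + 1, by omega⟩, rfl⟩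
      have his' : k i < k s' := hk (by rw [Fin.lt_def]; omega)
      have hs'j : k s' ≤ k j := hk.monotone (by rw [Fin.le_def]; omega)
      exact hind i s' ⟨i + 1, by omega⟩ ((apply_mem_Iv_iff hk).2 (by simp only; omega))
        ((apply_mem_Iv_iff hk).2 (by simp only; omega))
        (hA.adj_of_mem_uIcc hij (Set.mem_uIcc_of_le his'.le hs'j) his'.ne')
  · obtain ⟨t, hut⟩ := exists_mem_Iv k u
    obtain ⟨m, hm, hum⟩ := (hK t).2.2 u hut fun h => huK h.1
    exact ⟨m, hm.1, hum⟩

end LD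

open LD in
/-- structure of kernels of interval catch digraphs.
Let `G` be an interval catch digraph on `{1,…,n}` and let `k^1 < ⋯ < k^p` be the
elements of a set `K` (given by a strictly monotone enumeration `k`). Then `K`
is a kernel of `G` iff for every `t ∈ {0,…,p}`, the set `K ∩ I_t` is a kernel of
the subgraph of `G` induced by `I_t`. -/
theorem kernel_iff_interval_kernels {n p : ℕ} (A : Fin n → Fin n → Prop)
    (hA : IntervalCatchFull A) (k : Fin p → Fin n) (hk : StrictMono k) :
    Kernel Set.univ A (Set.range k) ↔
      ∀ t : Fin (p + 1), Kernel (Iv k t) A (Set.range k ∩ Iv k t) :=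
  ⟨kernel_inter_Iv_of_kernel hA hk, kernel_of_forall_kernel_inter_Iv hA hk⟩
end

section
/- Let (U,C) be a 3-SAT instance and let G_{U,C} be the associated symmetric (undirected) graph. Then G_{U,C} has a kernel containing no clause vertex if and only if (U,C) is satisfiable. -/
namespace LD

/-- Vertices of the gadget graph `G_{U,C}`: a variable vertex `(x, b)` represents
the literal `x` (if `b = true`) or `¬x` (if `b = false`); a clause vertex is the
index of a clause. -/
abbrev GadgetVtx (U : Type*) (nc : ℕ) := (U × Bool) ⊕ Fin nc

/-- Base relation generating the edges of `G_{U,C}`: the two vertices of a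
variable are adjacent, and each clause vertex is adjacent to the three variable
vertices corresponding to its literals. -/
def gadgetRel {U : Type*} {nc : ℕ} (Cl : Fin nc → Fin 3 → U × Bool) :
    GadgetVtx U nc → GadgetVtx U nc → Prop
  | Sum.inl (x, b), Sum.inl (y, c) => x = y ∧ b ≠ c
  | Sum.inr j, Sum.inl (x, b) => ∃ m : Fin 3, Cl j m = (x, b)
  | _, _ => False

/-- The (undirected) gadget graph `G_{U,C}` associated with a 3-SAT instance. -/
def gadgetGraph {U : Type*} {nc : ℕ} (Cl : Fin nc → Fin 3 → U × Bool) :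
    SimpleGraph (GadgetVtx U nc) :=
  SimpleGraph.fromRel (gadgetRel Cl)

/-- The 3-SAT instance `Cl` is satisfiable: some truth assignment makes at least
one literal of every clause true. -/
def Satisfiable {U : Type*} {nc : ℕ} (Cl : Fin nc → Fin 3 → U × Bool) : Prop :=
  ∃ σ : U → Bool, ∀ j : Fin nc, ∃ m : Fin 3, σ (Cl j m).1 = (Cl j m).2

end LD

open LD in
/-- Observation: kernels of `G_{U,C}` without clause vertices ↔
satisfiability. For a 3-SAT instance `(U, C)` (clause `j` has the three
literals `Cl j 0, Cl j 1, Cl j 2`), the symmetric graph `G_{U,C}` has a kernel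
containing no clause vertex iff `(U, C)` is satisfiable. -/
theorem gadget_kernel_iff_satisfiable {U : Type*} [Fintype U] [DecidableEq U]
    {nc : ℕ} (Cl : Fin nc → Fin 3 → U × Bool) :
    (∃ K : Set (GadgetVtx U nc),
        Kernel Set.univ (gadgetGraph Cl).Adj K ∧ ∀ j : Fin nc, Sum.inr j ∉ K) ↔
      Satisfiable Cl := by
  constructor
  · rintro ⟨K, ⟨-, hind, hdom⟩, hnoc⟩
    classical
    set σ : U → Bool := fun x => if Sum.inl (x, true) ∈ K then true else false with hσ
    have hmem : ∀ x : U, Sum.inl (x, σ x) ∈ K := by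
      intro x
      by_cases h : Sum.inl (x, true) ∈ K
      · simpa [hσ, h] using h
      · have : Sum.inl (x, false) ∈ K := by
          obtain ⟨k, hk, hadj⟩ := hdom (Sum.inl (x, true)) (Set.mem_univ _) h
          rw [gadgetGraph, SimpleGraph.fromRel_adj] at hadj
          obtain ⟨hne, hrel | hrel⟩ := hadj
          · match k, hrel with
            | Sum.inl (y, c), ⟨hxy, hbc⟩ =>
                subst hxy
                have : c = false := by
                  cases c
                  · rfl
                  · exact absurd rfl hbc
                subst this; exact hk
          · match k, hrel with
            | Sum.inr j, _ => exact absurd hk (hnoc j)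
            | Sum.inl (y, c), ⟨hxy, hbc⟩ =>
                subst hxy
                have : c = false := by
                  cases c
                  · rfl
                  · exact absurd rfl hbc
                subst this; exact hk
        simpa [hσ, h] using this
    refine ⟨σ, fun j => ?_⟩
    obtain ⟨k, hk, hadj⟩ := hdom (Sum.inr j) (Set.mem_univ _) (hnoc j)
    rw [gadgetGraph, SimpleGraph.fromRel_adj] at hadj
    obtain ⟨hne, hrel | hrel⟩ := hadj
    · match k, hrel with
      | Sum.inl (x, b), ⟨m, hm⟩ =>
        refine ⟨m, ?_⟩
        have hb : σ x = b := by
          by_contra hne2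
          have hadj2 : (gadgetGraph Cl).Adj (Sum.inl (x, σ x)) (Sum.inl (x, b)) := by
            rw [gadgetGraph, SimpleGraph.fromRel_adj]
            exact ⟨by simp [hne2], Or.inl ⟨rfl, hne2⟩⟩
          exact hind _ (hmem x) _ hk hadj2
        rw [hm]; exact hb
    · match k, hrel with
      | Sum.inl _, h => exact absurd h id
      | Sum.inr _, h => exact absurd h id
  · rintro ⟨σ, hσ⟩
    refine ⟨{v | ∃ x, v = Sum.inl (x, σ x)}, ⟨Set.subset_univ _, ?_, ?_⟩, ?_⟩
    · rintro _ ⟨x, rfl⟩ _ ⟨y, rfl⟩ hadj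
      rw [gadgetGraph, SimpleGraph.fromRel_adj] at hadj
      obtain ⟨hne, hrel | hrel⟩ := hadj
      · obtain ⟨h1, h2⟩ := hrel; subst h1; exact h2 rfl
      · obtain ⟨h1, h2⟩ := hrel; subst h1; exact h2 rfl
    · rintro u - hu
      match u with
      | Sum.inl (x, b) =>
          have hb : b ≠ σ x := fun h => hu ⟨x, by rw [h]⟩
          refine ⟨Sum.inl (x, σ x), ⟨x, rfl⟩, ?_⟩
          rw [gadgetGraph, SimpleGraph.fromRel_adj]
          exact ⟨by simp [hb], Or.inl ⟨rfl, hb⟩⟩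
      | Sum.inr j =>
          obtain ⟨m, hm⟩ := hσ j
          refine ⟨Sum.inl ((Cl j m).1, σ (Cl j m).1), ⟨_, rfl⟩, ?_⟩
          rw [gadgetGraph, SimpleGraph.fromRel_adj]
          refine ⟨by simp, Or.inl ⟨m, ?_⟩⟩
          rw [hm]
    · rintro j ⟨x, h⟩
      exact absurd h (by simp)
end

section
/- Let V be a finite set, let dist : V × V → ℝ be a symmetric function (dist(i,j) = dist(j,i) for all i,j), and let θ : V → ℝ. Consider the digraph G on V with an arc (i,j) for i ≠ j if and only if dist(i,j) ≤ θ(i). Then G admits a kernel. (In particular, every distance-based preference profile admits an equilibrium, and the greedy set obtained by repeatedly selecting a remaining vertex of smallest threshold θ and deleting it together with all vertices that have an arc towards it is such a kernel.) -/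
private lemma greedy_kernel {V : Type*} [DecidableEq V]
    (dist : V → V → ℝ) (hsym : ∀ i j : V, dist i j = dist j i) (θ : V → ℝ) :
    ∀ S : Finset V, ∃ K : Finset V, K ⊆ S ∧
      (∀ i ∈ K, ∀ j ∈ K, ¬ (i ≠ j ∧ dist i j ≤ θ i)) ∧
      (∀ u ∈ S, u ∉ K → ∃ k ∈ K, u ≠ k ∧ dist u k ≤ θ u) := by
  intro S
  induction S using Finset.strongInduction with
  | _ S ih =>
    rcases S.eq_empty_or_nonempty with rfl | hne
    · exact ⟨∅, by simp⟩
    · obtain ⟨v, hv, hmin⟩ := S.exists_min_image θ hne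
      set S' : Finset V := S.filter (fun u => u ≠ v ∧ ¬ dist u v ≤ θ u) with hS'
      have hss : S' ⊂ S := by
        refine Finset.filter_ssubset.mpr ⟨v, hv, ?_⟩
        simp
      obtain ⟨K', hK'sub, hK'ind, hK'abs⟩ := ih S' hss
      have hvnot : v ∉ K' := fun h => by
        have := hK'sub h
        simp [hS', Finset.mem_filter] at this
      refine ⟨insert v K', ?_, ?_, ?_⟩
      · intro x hx
        rcases Finset.mem_insert.mp hx with rfl | hx
        · exact hv
        · exact (Finset.filter_subset _ _) (hK'sub hx)
      · intro i hi j hj hA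
        obtain ⟨hne', hle⟩ := hA
        have key : ∀ k ∈ K', ¬ dist k v ≤ θ k := by
          intro k hk
          have := hK'sub hk
          simp [hS', Finset.mem_filter] at this
          exact not_le.mpr this.2.2
        rcases Finset.mem_insert.mp hi with hiv | hi <;>
          rcases Finset.mem_insert.mp hj with hjv | hj
        · exact hne' (hiv.trans hjv.symm)
        · -- i = v, j ∈ K'
          have hθ : θ v ≤ θ j := hmin j ((Finset.filter_subset _ _) (hK'sub hj))
          rw [hiv, hsym v j] at hle
          exact key j hj (hle.trans hθ)
        · -- i ∈ K', j = v
          rw [hjv] at hle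
          exact key i hi hle
        · exact hK'ind i hi j hj ⟨hne', hle⟩
      · intro u hu hunot
        have huv : u ≠ v := fun h => hunot (h ▸ Finset.mem_insert_self v K')
        by_cases huS' : u ∈ S'
        · obtain ⟨k, hk, hk2⟩ := hK'abs u huS' (fun h => hunot (Finset.mem_insert_of_mem h))
          exact ⟨k, Finset.mem_insert_of_mem hk, hk2⟩
        · have : dist u v ≤ θ u := by
            by_contra h
            exact huS' (Finset.mem_filter.mpr ⟨hu, huv, h⟩)
          exact ⟨v, Finset.mem_insert_self v K', huv, this⟩

open LD in
/-- distance-based digraphs always have a kernel.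
Let `V` be a finite set, `dist` a symmetric real-valued function on pairs, and
`θ : V → ℝ` a family of acceptability thresholds. The digraph on `V` with an
arc `(i,j)` for `i ≠ j` iff `dist i j ≤ θ i` admits a kernel.  (In particular,
every distance-based preference profile admits an equilibrium.) -/
theorem distance_based_has_kernel {V : Type*} [Fintype V]
    (dist : V → V → ℝ) (hsym : ∀ i j : V, dist i j = dist j i) (θ : V → ℝ) :
    ∃ K : Set V, Kernel Set.univ (fun i j => i ≠ j ∧ dist i j ≤ θ i) K := by
  classical
  obtain ⟨K, _, hind, habs⟩ := greedy_kernel dist hsym θ Finset.univ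
  refine ⟨(K : Set V), Set.subset_univ _, ?_, ?_⟩
  · intro i hi j hj
    exact hind i hi j hj
  · intro u _ hu
    obtain ⟨k, hk, h⟩ := habs u (Finset.mem_univ u) hu
    exact ⟨k, hk, h⟩
end
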